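/- arXiv:1810.05438 — 4 statements merged into one kernel-verified Lean document; each statement's English description precedes it below -/
import Mathlib

section
/- Strong duality for the τ-restricted total-variation deconvolution problem (Proposition 1): for every binary vector τ ∈ {0,1}^n, the primal optimal value p(τ) equals the dual optimal value d(τ). -/
/-!
The primal objective depends on `x` only through `(A x, (D_i x)_i)` and is coercive in these, so
it attains its minimum on the constraint subspace `V = ⋂_{τ_i = 0} ker D_i` at some `x`; weak
duality is Cauchy–Schwarz. Put `r = y - A x` and `u_i = D_i x / ‖D_i x‖`. Minimality gives, for
`z ∈ V`, the first-order inequality `⟪r, A z⟫ - λ ∑ ⟪u_i, D_i z⟫ ≤ λ ∑_{D_i x = 0} ‖D_i z‖`.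
Hahn–Banach represents the left-hand side on `V` by multipliers `γ_i` with `‖γ_i‖ ≤ λ`, supported
where `D_i x = 0`; the remainder vanishes on `V`, so it is `∑_{τ_i = 0} ⟪δ_i, D_i ·⟫`. Then
`(r, λ u + γ + δ)` is dual feasible, and complementary slackness makes the two values equal.
-/

open Matrix BigOperators Filter Topology
open scoped RealInnerProductSpace

theorem nonneg_of_forall_pos_mul_add_sq_nonneg {a C : ℝ}
    (h : ∀ t > 0, 0 ≤ t * a + t ^ 2 * C) : 0 ≤ a := by
  have hlim : Tendsto (fun t : ℝ => a + t * C) (𝓝[>] 0) (𝓝 a) :=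
    tendsto_nhdsWithin_of_tendsto_nhds <|
      (continuous_const.add (continuous_id.mul continuous_const)).tendsto' 0 a (by simp)
  refine ge_of_tendsto hlim (eventually_nhdsWithin_of_forall fun t (ht : 0 < t) => ?_)
  have := h t ht
  nlinarith

theorem sInf_image_eq_sSup_image_of_le {α β γ : Type*} [CompleteLattice γ] {f : α → γ}
    {g : β → γ} {S : Set α} {T : Set β} (hle : ∀ x ∈ S, ∀ p ∈ T, g p ≤ f x) {x₀ : α} {p₀ : β}
    (hx₀ : x₀ ∈ S) (hp₀ : p₀ ∈ T) (heq : f x₀ = g p₀) : sInf (f '' S) = sSup (g '' T) :=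
  le_antisymm
    ((sInf_le (Set.mem_image_of_mem f hx₀)).trans (heq ▸ le_sSup (Set.mem_image_of_mem g hp₀)))
    (sSup_le <| Set.forall_mem_image.2 fun p hp => le_sInf <| Set.forall_mem_image.2 fun x hx =>
      hle x hx p hp)

theorem LinearMap.exists_comp_eq_of_ker_le {K M N : Type*} [Field K] [AddCommGroup M] [Module K M]
    [AddCommGroup N] [Module K N] (φ : M →ₗ[K] K) (f : M →ₗ[K] N)
    (h : LinearMap.ker f ≤ LinearMap.ker φ) :
    ∃ ψ : N →ₗ[K] K, ψ ∘ₗ f = φ := by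
  show φ ∈ LinearMap.range f.dualMap
  rw [LinearMap.range_dualMap_eq_dualAnnihilator_ker, Submodule.mem_dualAnnihilator]
  exact fun z hz => h hz

section InnerProduct

variable {G : Type*} [NormedAddCommGroup G] [InnerProductSpace ℝ G]

theorem norm_mul_norm_add_le (a b : G) : ‖a‖ * ‖a + b‖ ≤ ‖a‖ ^ 2 + ⟪a, b⟫ + ‖b‖ ^ 2 / 2 := by
  nlinarith [two_mul_le_add_sq ‖a‖ ‖a + b‖, norm_add_sq_real a b]

open Classical in
/-- At `a = 0` the junk values `‖a‖⁻¹ • a = 0` and `‖b‖ ^ 2 / (2 * ‖a‖) = 0` leave the whole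
increment to the `if` term. -/
theorem norm_add_smul_le (a b : G) {t : ℝ} (ht : 0 ≤ t) :
    ‖a + t • b‖ ≤ ‖a‖ + t * (⟪‖a‖⁻¹ • a, b⟫ + if a = 0 then ‖b‖ else 0)
      + t ^ 2 * (‖b‖ ^ 2 / (2 * ‖a‖)) := by
  rcases eq_or_ne a 0 with rfl | ha
  · simp [norm_smul, abs_of_nonneg ht]
  have hpos : 0 < ‖a‖ := norm_pos_iff.2 ha
  have key := norm_mul_norm_add_le a (t • b)
  rw [real_inner_smul_right, norm_smul, Real.norm_of_nonneg ht, ← le_div_iff₀' hpos] at key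
  rw [if_neg ha, add_zero, real_inner_smul_left]
  calc ‖a + t • b‖ ≤ _ := key
    _ = _ := by field_simp

end InnerProduct

section Representation

variable {X G ι : Type*} [AddCommGroup X] [Module ℝ X] [NormedAddCommGroup G]
  [InnerProductSpace ℝ G] [FiniteDimensional ℝ G] [Fintype ι]

theorem exists_inner_repr (ψ : (ι → G) →ₗ[ℝ] ℝ) : ∃ γ : ι → G, ∀ w, ψ w = ∑ i, ⟪γ i, w i⟫ := by
  classical
  refine ⟨fun i => (InnerProductSpace.toDual ℝ G).symm
    (LinearMap.toContinuousLinearMap (ψ ∘ₗ LinearMap.single ℝ (fun _ => G) i)), fun w => ?_⟩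
  conv_lhs => rw [← Finset.univ_sum_single w]
  simp [InnerProductSpace.toDual_symm_apply]

theorem exists_inner_repr_of_le_ker (D : ι → X →ₗ[ℝ] G) (s : Set ι) (φ : X →ₗ[ℝ] ℝ)
    (h : ⨅ (i) (_ : i ∉ s), LinearMap.ker (D i) ≤ LinearMap.ker φ) :
    ∃ δ : ι → G, (∀ i ∈ s, δ i = 0) ∧ ∀ z, φ z = ∑ i, ⟪δ i, D i z⟫ := by
  classical
  let L : X →ₗ[ℝ] ι → G := LinearMap.pi fun i => if i ∈ s then 0 else D i
  obtain ⟨ψ, hψ⟩ := φ.exists_comp_eq_of_ker_le L fun z hz => h <| by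
    simp only [Submodule.mem_iInf, LinearMap.mem_ker]
    intro i hi
    simpa [L, hi] using congrFun hz i
  obtain ⟨δ, hδ⟩ := exists_inner_repr ψ
  refine ⟨fun i => if i ∈ s then 0 else δ i, fun i hi => if_pos hi, fun z => ?_⟩
  rw [← hψ, LinearMap.comp_apply, hδ]
  refine Finset.sum_congr rfl fun i _ => ?_
  by_cases hi : i ∈ s <;> simp [L, hi]

theorem exists_bounded_inner_repr_of_le (D : ι → X →ₗ[ℝ] G) (V : Submodule ℝ X)
    (Z : Finset ι) {c : ℝ} (hc : 0 ≤ c) (φ : X →ₗ[ℝ] ℝ)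
    (h : ∀ z ∈ V, φ z ≤ c * ∑ i ∈ Z, ‖D i z‖) :
    ∃ γ : ι → G, (∀ i, ‖γ i‖ ≤ c) ∧ (∀ i ∉ Z, γ i = 0) ∧ ∀ z ∈ V, φ z = ∑ i, ⟪γ i, D i z⟫ := by
  classical
  let L : V →ₗ[ℝ] ι → G := LinearMap.pi D ∘ₗ V.subtype
  let N : (ι → G) → ℝ := fun w => c * ∑ i ∈ Z, ‖w i‖
  obtain ⟨ψ₀, hψ₀⟩ := (φ ∘ₗ V.subtype).exists_comp_eq_of_ker_le L fun z hz => by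
    have hDz : ∀ i, D i z = 0 := congrFun hz
    have h₁ := h z z.2
    have h₂ := h (-z) (neg_mem z.2)
    simp only [hDz, map_neg, norm_neg, norm_zero, Finset.sum_const_zero, mul_zero] at h₁ h₂
    show φ z = 0
    linarith
  obtain ⟨ψ, hψ_eq, hψ_le⟩ := exists_extension_of_le_sublinear
    ⟨LinearMap.range L, ψ₀ ∘ₗ (LinearMap.range L).subtype⟩ N
    (fun r hr w => by
      simp only [N, Pi.smul_apply, norm_smul, Real.norm_of_nonneg hr.le, ← Finset.mul_sum]
      ring)
    (fun w w' => by
      simp only [N, Pi.add_apply, ← mul_add, ← Finset.sum_add_distrib]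
      exact mul_le_mul_of_nonneg_left (Finset.sum_le_sum fun i _ => norm_add_le _ _) hc)
    (fun ⟨_, z, rfl⟩ => by
      show ψ₀ (L z) ≤ N (L z)
      rw [← LinearMap.comp_apply ψ₀ L, hψ₀]
      exact h z z.2)
  obtain ⟨γ, hγ⟩ := exists_inner_repr ψ
  have hsingle : ∀ i, ‖γ i‖ ^ 2 ≤ N (Pi.single i (γ i)) := fun i => by
    simpa [hγ, Pi.single_apply, apply_ite] using hψ_le (Pi.single i (γ i))
  have hzero : ∀ i ∉ Z, γ i = 0 := fun i hi => by
    simpa [N, Pi.single_apply, apply_ite, hi] using hsingle i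
  refine ⟨γ, fun i => ?_, hzero, fun z hz => ?_⟩
  · by_cases hi : i ∈ Z
    · have := hsingle i
      simp only [N, Pi.single_apply, apply_ite, norm_zero, Finset.sum_ite_eq', hi, ↓reduceIte]
        at this
      nlinarith [norm_nonneg (γ i)]
    · simp [hzero i hi, hc]
  · have := hψ_eq ⟨L ⟨z, hz⟩, ⟨z, hz⟩, rfl⟩
    simp only [LinearPMap.mk_apply, LinearMap.comp_apply, Submodule.subtype_apply] at this
    rw [← LinearMap.comp_apply ψ₀ L, hψ₀] at this
    simpa [hγ, L] using this.symm

end Representation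

theorem tendsto_half_norm_sub_sq_add_sum_norm_cocompact {F G ι : Type*} [NormedAddCommGroup F]
    [ProperSpace F] [NormedAddCommGroup G] [ProperSpace G] [Fintype ι] (y : F) {lam : ℝ}
    (hlam : 0 < lam) :
    Tendsto (fun p : F × (ι → G) => 1 / 2 * ‖y - p.1‖ ^ 2 + lam * ∑ i, ‖p.2 i‖)
      (cocompact _) atTop := by
  have hc : 0 < min 1 lam := lt_min one_pos hlam
  refine tendsto_atTop_mono (fun p => ?_) <| tendsto_atTop_add_const_right _ (-(‖y‖ + 1))
    (tendsto_norm_cocompact_atTop.const_mul_atTop hc)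
  have hprod : ‖p‖ ≤ ‖p.1‖ + ‖p.2‖ := by
    rw [Prod.norm_def]; exact max_le_add_of_nonneg (norm_nonneg _) (norm_nonneg _)
  have hpi : ‖p.2‖ ≤ ∑ i, ‖p.2 i‖ := (pi_norm_le_iff_of_nonneg (by positivity)).2 fun i =>
    Finset.single_le_sum (fun j _ => norm_nonneg (p.2 j)) (Finset.mem_univ i)
  have hfst : ‖p.1‖ ≤ ‖y‖ + ‖y - p.1‖ := by
    simpa using norm_sub_le y (y - p.1)
  have h1 : min 1 lam ≤ 1 := min_le_left _ _
  have h2 : min 1 lam ≤ lam := min_le_right _ _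
  nlinarith [sq_nonneg (‖y - p.1‖ - 1), norm_nonneg y, norm_nonneg p, norm_nonneg (y - p.1),
    norm_nonneg p.2]

namespace TVDeconv

variable {X F G ι : Type*} [AddCommGroup X] [Module ℝ X] [NormedAddCommGroup F]
  [InnerProductSpace ℝ F] [NormedAddCommGroup G] [InnerProductSpace ℝ G]

def subspace (D : ι → X →ₗ[ℝ] G) (s : Set ι) : Submodule ℝ X :=
  ⨅ (i) (_ : i ∉ s), LinearMap.ker (D i)

theorem mem_subspace {D : ι → X →ₗ[ℝ] G} {s : Set ι} {x : X} :
    x ∈ subspace D s ↔ ∀ i ∉ s, D i x = 0 := by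
  simp [subspace]

variable [Fintype ι]

section Defs

variable (A : X →ₗ[ℝ] F) (D : ι → X →ₗ[ℝ] G) (y : F) (lam : ℝ) (s : Set ι)

noncomputable def primal (x : X) : ℝ := 1 / 2 * ‖y - A x‖ ^ 2 + lam * ∑ i, ‖D i x‖

def IsDualFeasible (α : F) (β : ι → G) : Prop :=
  (∀ x, ⟪α, A x⟫ = ∑ i, ⟪β i, D i x⟫) ∧ ∀ i ∈ s, ‖β i‖ ≤ lam

noncomputable def dual (α : F) : ℝ := -(1 / 2) * ‖α‖ ^ 2 + ⟪α, y⟫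

end Defs

variable {A : X →ₗ[ℝ] F} {D : ι → X →ₗ[ℝ] G} {y : F} {lam : ℝ} {s : Set ι}

theorem dual_le_primal {x : X} (hx : x ∈ subspace D s) {α : F} {β : ι → G}
    (hαβ : IsDualFeasible A D lam s α β) : dual y α ≤ primal A D y lam x := by
  have hres : ⟪α, y - A x⟫ ≤ 1 / 2 * ‖α‖ ^ 2 + 1 / 2 * ‖y - A x‖ ^ 2 := by
    nlinarith [real_inner_le_norm α (y - A x), two_mul_le_add_sq ‖α‖ ‖y - A x‖]
  have hpen : ⟪α, A x⟫ ≤ lam * ∑ i, ‖D i x‖ := by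
    rw [hαβ.1, Finset.mul_sum]
    refine Finset.sum_le_sum fun i _ => ?_
    by_cases hi : i ∈ s
    · exact (real_inner_le_norm _ _).trans
        (mul_le_mul_of_nonneg_right (hαβ.2 i hi) (norm_nonneg _))
    · simp [mem_subspace.1 hx i hi]
  rw [inner_sub_right] at hres
  rw [dual, primal]
  linarith

theorem exists_isMinOn_primal [FiniteDimensional ℝ F] [FiniteDimensional ℝ G] (hlam : 0 < lam)
    (V : Submodule ℝ X) : ∃ x ∈ V, IsMinOn (primal A D y lam) V x := by
  let T : X →ₗ[ℝ] F × (ι → G) := A.prod (LinearMap.pi D)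
  have hg : Continuous fun p : F × (ι → G) => 1 / 2 * ‖y - p.1‖ ^ 2 + lam * ∑ i, ‖p.2 i‖ := by
    fun_prop
  obtain ⟨_, ⟨x, hx, rfl⟩, hmin⟩ := hg.continuousOn.exists_isMinOn'
    (V.map T).closed_of_finiteDimensional (V.map T).zero_mem
    (((tendsto_half_norm_sub_sq_add_sum_norm_cocompact y hlam).eventually_ge_atTop _).filter_mono
      inf_le_left)
  exact ⟨x, hx, fun z hz => hmin ⟨z, hz, rfl⟩⟩

open Classical in
theorem inner_sub_sum_inner_le_of_isMinOn (hlam : 0 ≤ lam) {V : Submodule ℝ X} {x : X}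
    (hx : x ∈ V) (hmin : IsMinOn (primal A D y lam) V x) {z : X} (hz : z ∈ V) :
    ⟪y - A x, A z⟫ - lam * ∑ i, ⟪‖D i x‖⁻¹ • D i x, D i z⟫
      ≤ lam * ∑ i with D i x = 0, ‖D i z‖ := by
  refine sub_nonneg.1 (nonneg_of_forall_pos_mul_add_sq_nonneg
    (C := ‖A z‖ ^ 2 / 2 + lam * ∑ i, ‖D i z‖ ^ 2 / (2 * ‖D i x‖)) fun t ht => ?_)
  have hle : primal A D y lam x ≤ primal A D y lam (x + t • z) :=
    hmin (V.add_mem hx (V.smul_mem t hz))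
  have hquad : ‖y - A (x + t • z)‖ ^ 2
      = ‖y - A x‖ ^ 2 - 2 * t * ⟪y - A x, A z⟫ + t ^ 2 * ‖A z‖ ^ 2 := by
    rw [map_add, map_smul, ← sub_sub, norm_sub_sq_real, real_inner_smul_right, norm_smul,
      Real.norm_of_nonneg ht.le]
    ring
  have hpen : ∑ i, ‖D i (x + t • z)‖ ≤ ∑ i, ‖D i x‖
      + t * (∑ i, ⟪‖D i x‖⁻¹ • D i x, D i z⟫ + ∑ i with D i x = 0, ‖D i z‖)
      + t ^ 2 * ∑ i, ‖D i z‖ ^ 2 / (2 * ‖D i x‖) := by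
    simp only [map_add, map_smul]
    refine (Finset.sum_le_sum fun i _ => norm_add_smul_le (D i x) (D i z) ht.le).trans_eq ?_
    simp only [Finset.sum_filter, Finset.sum_add_distrib, Finset.mul_sum, mul_add]
  rw [primal, primal, hquad] at hle
  nlinarith [mul_le_mul_of_nonneg_left hpen hlam]

theorem exists_primal_eq_dual [FiniteDimensional ℝ F] [FiniteDimensional ℝ G] (hlam : 0 < lam) :
    ∃ x ∈ subspace D s, ∃ α β, IsDualFeasible A D lam s α β ∧ primal A D y lam x = dual y α := by
  classical
  obtain ⟨x, hxV, hmin⟩ := exists_isMinOn_primal (A := A) (D := D) (y := y) hlam (subspace D s)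
  set r := y - A x
  set u : ι → G := fun i => ‖D i x‖⁻¹ • D i x
  let φ : X →ₗ[ℝ] ℝ := innerₗ F r ∘ₗ A - lam • ∑ i, innerₗ G (u i) ∘ₗ D i
  have hφ : ∀ z, φ z = ⟪r, A z⟫ - lam * ∑ i, ⟪u i, D i z⟫ := fun z => by simp [φ]
  obtain ⟨γ, hγ_le, hγ_zero, hγ⟩ := exists_bounded_inner_repr_of_le D (subspace D s)
    {i | D i x = 0} hlam.le φ fun z hz => by
      rw [hφ]; exact inner_sub_sum_inner_le_of_isMinOn hlam.le hxV hmin hz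
  obtain ⟨δ, hδ_zero, hδ⟩ := exists_inner_repr_of_le_ker D s
    (φ - ∑ i, innerₗ G (γ i) ∘ₗ D i) fun z hz => by simp [hγ z hz]
  let β : ι → G := fun i => lam • u i + γ i + δ i
  have hfeas : ∀ z, ⟪r, A z⟫ = ∑ i, ⟪β i, D i z⟫ := fun z => by
    have := hδ z
    simp only [LinearMap.sub_apply, hφ, LinearMap.coe_sum, LinearMap.coe_comp, Finset.sum_apply,
      Function.comp_apply, innerₗ_apply_apply] at this
    simp only [β, inner_add_left, real_inner_smul_left, Finset.sum_add_distrib, ← Finset.mul_sum]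
    linarith
  have hβx : ∀ i, ⟪β i, D i x⟫ = lam * ‖D i x‖ := fun i => by
    by_cases hi : D i x = 0
    · simp [hi]
    have his : i ∈ s := by
      by_contra his; exact hi (mem_subspace.1 hxV i his)
    simp only [β, u, hγ_zero i (by simpa using hi), hδ_zero i his, add_zero, real_inner_smul_left,
      real_inner_self_eq_norm_sq]
    field_simp [norm_ne_zero_iff.2 hi]
  refine ⟨x, hxV, r, β, ⟨hfeas, fun i hi => ?_⟩, ?_⟩
  · by_cases hDx : D i x = 0
    · simpa [β, u, hDx, hδ_zero i hi] using hγ_le i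
    · simp [β, u, hγ_zero i (by simpa using hDx), hδ_zero i hi, norm_smul,
        inv_mul_cancel₀ (norm_ne_zero_iff.2 hDx), abs_of_pos hlam]
  · have hrx := hfeas x
    simp only [hβx, ← Finset.mul_sum] at hrx
    have hy : y = r + A x := by simp [r]
    rw [primal, dual, hy, inner_add_right, real_inner_self_eq_norm_sq, hrx, ← hy]
    ring

end TVDeconv

section Matrices

variable {n : ℕ}

def toLpMulVec (A : Matrix (Fin n) (Fin n) ℝ) : (Fin n → ℝ) →ₗ[ℝ] EuclideanSpace ℝ (Fin n) :=
  (WithLp.linearEquiv 2 ℝ (Fin n → ℝ)).symm.toLinearMap ∘ₗ A.mulVecLin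

def gradientAt (Dv Dh : Matrix (Fin n) (Fin n) ℝ) (i : Fin n) :
    (Fin n → ℝ) →ₗ[ℝ] EuclideanSpace ℝ (Fin 2) where
  toFun x := !₂[(Dv *ᵥ x) i, (Dh *ᵥ x) i]
  map_add' x x' := by ext j; fin_cases j <;> simp [mulVec_add]
  map_smul' c x := by ext j; fin_cases j <;> simp [mulVec_smul]

theorem norm_vec₂ (a b : ℝ) : ‖!₂[a, b]‖ = Real.sqrt (a ^ 2 + b ^ 2) := by
  simp [EuclideanSpace.norm_eq, Fin.sum_univ_two]

theorem vec₂_eq_zero_iff {a b : ℝ} : !₂[a, b] = 0 ↔ a = 0 ∧ b = 0 := by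
  rw [← norm_eq_zero, norm_vec₂, Real.sqrt_eq_zero (by positivity)]
  constructor
  · intro h; constructor <;> nlinarith [sq_nonneg a, sq_nonneg b]
  · rintro ⟨rfl, rfl⟩; simp

theorem primal_toLpMulVec (A Dv Dh : Matrix (Fin n) (Fin n) ℝ) (y : Fin n → ℝ) (lam : ℝ)
    (x : Fin n → ℝ) :
    TVDeconv.primal (toLpMulVec A) (gradientAt Dv Dh) (WithLp.toLp 2 y) lam x
      = 1 / 2 * ∑ i, (y i - (A *ᵥ x) i) ^ 2
        + lam * ∑ i, Real.sqrt ((Dv *ᵥ x) i ^ 2 + (Dh *ᵥ x) i ^ 2) := by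
  simp [TVDeconv.primal, toLpMulVec, gradientAt, norm_vec₂, EuclideanSpace.norm_sq_eq]

theorem dual_toLp (y α : Fin n → ℝ) :
    TVDeconv.dual (WithLp.toLp 2 y) (WithLp.toLp 2 α)
      = -(1 / 2) * ∑ i, α i ^ 2 + ∑ i, α i * y i := by
  simp [TVDeconv.dual, EuclideanSpace.norm_sq_eq, PiLp.inner_apply, mul_comm]

theorem mem_subspace_gradientAt_iff {Dv Dh : Matrix (Fin n) (Fin n) ℝ} {τ : Fin n → ℝ}
    (hτ : ∀ i, τ i = 0 ∨ τ i = 1) {x : Fin n → ℝ} :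
    x ∈ TVDeconv.subspace (gradientAt Dv Dh) {i | τ i = 1}
      ↔ ∀ i, τ i = 0 → (Dv *ᵥ x) i = 0 ∧ (Dh *ᵥ x) i = 0 := by
  simp only [TVDeconv.mem_subspace, Set.mem_ofPred_eq, gradientAt, LinearMap.coe_mk,
    AddHom.coe_mk, vec₂_eq_zero_iff]
  refine forall_congr' fun i => imp_congr_left ?_
  rcases hτ i with h | h <;> simp [h]

theorem isDualFeasible_iff {A Dv Dh : Matrix (Fin n) (Fin n) ℝ} {lam : ℝ} {τ : Fin n → ℝ}
    {α βv βh : Fin n → ℝ} :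
    TVDeconv.IsDualFeasible (toLpMulVec A) (gradientAt Dv Dh) lam {i | τ i = 1}
        (WithLp.toLp 2 α) (fun i => !₂[βv i, βh i])
      ↔ Aᵀ *ᵥ α = Dvᵀ *ᵥ βv + Dhᵀ *ᵥ βh
        ∧ ∀ i, τ i = 1 → Real.sqrt (βv i ^ 2 + βh i ^ 2) ≤ lam := by
  refine and_congr ?_ (by simp [norm_vec₂])
  rw [← dotProduct_eq_iff]
  refine forall_congr' fun x => ?_
  simp only [add_dotProduct, mulVec_transpose, ← dotProduct_mulVec]
  simp [toLpMulVec, gradientAt, PiLp.inner_apply, Fin.sum_univ_two, dotProduct, mul_comm,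
    Finset.sum_add_distrib]

end Matrices

theorem mptv_strong_duality_general (n : ℕ) (y : Fin n → ℝ)
    (A Dv Dh : Matrix (Fin n) (Fin n) ℝ) (lam : ℝ) (hlam : 0 < lam)
    (τ : Fin n → ℝ) (hτ : ∀ i, τ i = 0 ∨ τ i = 1) :
    sInf ((fun x : Fin n → ℝ =>
        (((1 / 2) * ∑ i, (y i - A.mulVec x i) ^ 2
          + lam * ∑ i, Real.sqrt ((Dv.mulVec x i) ^ 2 + (Dh.mulVec x i) ^ 2) : ℝ) : EReal)) ''
      {x : Fin n → ℝ | ∀ i, τ i = 0 → Dv.mulVec x i = 0 ∧ Dh.mulVec x i = 0})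
    = sSup ((fun p : (Fin n → ℝ) × (Fin n → ℝ) × (Fin n → ℝ) =>
        ((-(1 / 2) * ∑ i, (p.1 i) ^ 2 + ∑ i, p.1 i * y i : ℝ) : EReal)) ''
      {p : (Fin n → ℝ) × (Fin n → ℝ) × (Fin n → ℝ) |
        Aᵀ.mulVec p.1 = Dvᵀ.mulVec p.2.1 + Dhᵀ.mulVec p.2.2
        ∧ ∀ i, τ i = 1 → Real.sqrt ((p.2.1 i) ^ 2 + (p.2.2 i) ^ 2) ≤ lam}) := by
  obtain ⟨x, hx, α, β, hαβ, heq⟩ := TVDeconv.exists_primal_eq_dual (A := toLpMulVec A)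
    (D := gradientAt Dv Dh) (y := WithLp.toLp 2 y) (s := {i | τ i = 1}) hlam
  have hβ : (fun i => !₂[β i 0, β i 1]) = β := funext fun i => by ext j; fin_cases j <;> rfl
  refine sInf_image_eq_sSup_image_of_le (x₀ := x) (p₀ := (α.ofLp, fun i => β i 0, fun i => β i 1))
    (fun x hx p hp => ?_) ((mem_subspace_gradientAt_iff hτ).1 hx)
    (isDualFeasible_iff.1 (by rwa [hβ])) ?_
  · rw [EReal.coe_le_coe_iff, ← primal_toLpMulVec, ← dual_toLp]
    exact TVDeconv.dual_le_primal ((mem_subspace_gradientAt_iff hτ).2 hx) (isDualFeasible_iff.2 hp)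
  · rw [← primal_toLpMulVec, ← dual_toLp, heq]

/-- Proposition 1 (strong duality): for every binary vector τ ∈ {0,1}^n, the primal
optimal value of the τ-restricted TV deconvolution problem equals the dual optimal value. -/
theorem mptv_strong_duality (n : ℕ) (hn : 1 ≤ n) (y : Fin n → ℝ)
    (A Dv Dh : Matrix (Fin n) (Fin n) ℝ) (lam : ℝ) (hlam : 0 < lam)
    (τ : Fin n → ℝ) (hτ : ∀ i, τ i = 0 ∨ τ i = 1) :
    sInf ((fun x : Fin n → ℝ =>
        (((1 / 2) * ∑ i, (y i - A.mulVec x i) ^ 2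
          + lam * ∑ i, Real.sqrt ((Dv.mulVec x i) ^ 2 + (Dh.mulVec x i) ^ 2) : ℝ) : EReal)) ''
      {x : Fin n → ℝ | ∀ i, τ i = 0 → Dv.mulVec x i = 0 ∧ Dh.mulVec x i = 0})
    = sSup ((fun p : (Fin n → ℝ) × (Fin n → ℝ) × (Fin n → ℝ) =>
        ((-(1 / 2) * ∑ i, (p.1 i) ^ 2 + ∑ i, p.1 i * y i : ℝ) : EReal)) ''
      {p : (Fin n → ℝ) × (Fin n → ℝ) × (Fin n → ℝ) |
        Aᵀ.mulVec p.1 = Dvᵀ.mulVec p.2.1 + Dhᵀ.mulVec p.2.2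
        ∧ ∀ i, τ i = 1 → Real.sqrt ((p.2.1 i) ^ 2 + (p.2.2 i) ^ 2) ≤ lam}) :=
  mptv_strong_duality_general n y A Dv Dh lam hlam τ hτ
end

section
/- Dual optimum as the primal residual (Proposition 1, attainment part): for every binary vector τ ∈ {0,1}^n, if x* attains the primal infimum p(τ) and (α*, β_v*, β_h*) attains the dual supremum d(τ), then α* = y − A x*. -/
/-!
Write `r = y - A x*`. Perturbing `x*` along a feasible direction `h` and letting the step
tend to `0` gives `⟪Aᵀ r, h⟫ ≤ λ TV(h)` on the feasible subspace, and shrinking `x*` towards `0`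
gives `⟪r, A x*⟫ ≥ λ TV(x*)`. The admissible set `{Dvᵀ βv + Dhᵀ βh}` is convex and closed
(a subspace plus a compact set), so by Hahn–Banach separation the first inequality makes `r`
dual feasible. Weak duality gives `⟪α*, A x*⟫ ≤ λ TV(x*)`, and since the dual objective is
`1`-strongly concave with gradient `y - α`, comparing its values at `α*` and `r` yields
`‖α* - r‖² ≤ 0`.
-/

open Matrix Filter Topology Pointwise

lemma mul_add_mul_le_sqrt_mul_sqrt (a b c d : ℝ) :
    a * c + b * d ≤ √(a ^ 2 + b ^ 2) * √(c ^ 2 + d ^ 2) := by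
  rw [← Real.sqrt_mul (by positivity)]
  exact (le_abs_self _).trans (Real.abs_le_sqrt (by nlinarith [sq_nonneg (a * d - b * c)]))

lemma sqrt_add_sq_add_le (a b c d : ℝ) :
    √((a + c) ^ 2 + (b + d) ^ 2) ≤ √(a ^ 2 + b ^ 2) + √(c ^ 2 + d ^ 2) := by
  rw [Real.sqrt_le_iff]
  refine ⟨by positivity, ?_⟩
  nlinarith [mul_add_mul_le_sqrt_mul_sqrt a b c d, Real.sq_sqrt (by positivity : 0 ≤ a ^ 2 + b ^ 2),
    Real.sq_sqrt (by positivity : 0 ≤ c ^ 2 + d ^ 2)]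

lemma sqrt_mul_sq_add_mul_sq (t a b : ℝ) :
    √((t * a) ^ 2 + (t * b) ^ 2) = |t| * √(a ^ 2 + b ^ 2) := by
  rw [← Real.sqrt_sq_eq_abs, ← Real.sqrt_mul (sq_nonneg t)]
  ring_nf

lemma eq_zero_of_forall_mul_lt {a u : ℝ} (h : ∀ c, a * c < u) : a = 0 := by
  by_contra ha
  simpa [mul_div_cancel₀ _ ha] using h (u / a)

lemma exists_sqrt_le_mul_add_mul_eq {lam : ℝ} (hlam : 0 ≤ lam) (a b : ℝ) :
    ∃ c d : ℝ, √(c ^ 2 + d ^ 2) ≤ lam ∧ a * c + b * d = lam * √(a ^ 2 + b ^ 2) := by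
  set s := √(a ^ 2 + b ^ 2)
  have hs : s ^ 2 = a ^ 2 + b ^ 2 := Real.sq_sqrt (by positivity)
  refine ⟨lam * a / s, lam * b / s, ?_, ?_⟩
  · rcases eq_or_ne s 0 with h0 | h0
    · simp [h0, hlam]
    rw [div_eq_mul_inv, div_eq_mul_inv, mul_right_comm, mul_right_comm lam b,
      sqrt_mul_sq_add_mul_sq, abs_of_nonneg (by positivity), mul_assoc, inv_mul_cancel₀ h0,
      mul_one]
  · rcases eq_or_ne s 0 with h0 | h0
    · simp [h0]
    field_simp
    rw [hs]

noncomputable section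

variable {ι k m : Type*}

def isoTV [Fintype ι] [Fintype k] (Dv Dh : Matrix k ι ℝ) (x : ι → ℝ) : ℝ :=
  ∑ i, √((Dv *ᵥ x) i ^ 2 + (Dh *ᵥ x) i ^ 2)

def maskSubspace [Fintype ι] (τ : k → ℝ) (Dv Dh : Matrix k ι ℝ) : Submodule ℝ (ι → ℝ) where
  carrier := {x | ∀ i, τ i = 0 → (Dv *ᵥ x) i = 0 ∧ (Dh *ᵥ x) i = 0}
  add_mem' hx hy i hi := by simp [mulVec_add, hx i hi, hy i hi]
  zero_mem' := by simp
  smul_mem' c x hx i hi := by simp [mulVec_smul, hx i hi]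

def primalObjective [Fintype ι] [Fintype k] [Fintype m] (y : m → ℝ) (A : Matrix m ι ℝ)
    (Dv Dh : Matrix k ι ℝ) (lam : ℝ) (x : ι → ℝ) : ℝ :=
  (1 / 2) * ∑ i, (y i - (A *ᵥ x) i) ^ 2 + lam * isoTV Dv Dh x

def dualObjective [Fintype m] (y α : m → ℝ) : ℝ :=
  -(1 / 2) * ∑ i, α i ^ 2 + α ⬝ᵥ y

def maskedDualBall (τ : k → ℝ) (lam : ℝ) : Set ((k → ℝ) × (k → ℝ)) :=
  {β | ∀ i, τ i = 1 → √(β.1 i ^ 2 + β.2 i ^ 2) ≤ lam}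

def freeDualSubspace (τ : k → ℝ) : Submodule ℝ ((k → ℝ) × (k → ℝ)) :=
  (Submodule.pi {i | τ i = 1} fun _ => ⊥).prod (Submodule.pi {i | τ i = 1} fun _ => ⊥)

def dualMap [Fintype k] (Dv Dh : Matrix k ι ℝ) : (k → ℝ) × (k → ℝ) →ₗ[ℝ] (ι → ℝ) :=
  Dvᵀ.mulVecLin.coprod Dhᵀ.mulVecLin

variable {τ : k → ℝ} {lam : ℝ} {Dv Dh : Matrix k ι ℝ}

lemma convex_maskedDualBall : Convex ℝ (maskedDualBall τ lam) := by
  intro β hβ β' hβ' a b ha hb hab i hi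
  calc √((a • β + b • β').1 i ^ 2 + (a • β + b • β').2 i ^ 2)
      ≤ a * √(β.1 i ^ 2 + β.2 i ^ 2) + b * √(β'.1 i ^ 2 + β'.2 i ^ 2) := by
        simpa [sqrt_mul_sq_add_mul_sq, abs_of_nonneg, ha, hb] using
          sqrt_add_sq_add_le (a * β.1 i) (a * β.2 i) (b * β'.1 i) (b * β'.2 i)
    _ ≤ a * lam + b * lam := by gcongr; exacts [hβ i hi, hβ' i hi]
    _ = lam := by rw [← add_mul, hab, one_mul]

lemma isCompact_maskedDualBall_one : IsCompact (maskedDualBall (fun _ : k => 1) lam) := by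
  have hsub : maskedDualBall (fun _ : k => 1) lam ⊆
      (Set.univ.pi fun _ => Set.Icc (-lam) lam) ×ˢ (Set.univ.pi fun _ => Set.Icc (-lam) lam) := by
    intro β hβ
    refine ⟨fun i _ => abs_le.mp ?_, fun i _ => abs_le.mp ?_⟩
    · exact (Real.abs_le_sqrt (by nlinarith)).trans (hβ i rfl)
    · exact (Real.abs_le_sqrt (by nlinarith)).trans (hβ i rfl)
  refine ((isCompact_univ_pi fun _ => isCompact_Icc).prod
    (isCompact_univ_pi fun _ => isCompact_Icc)).of_isClosed_subset ?_ hsub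
  simp only [maskedDualBall, forall_const, Set.ofPred_forall]
  exact isClosed_iInter fun i => isClosed_le (by fun_prop) continuous_const

lemma maskedDualBall_eq_add (hlam : 0 ≤ lam) :
    maskedDualBall τ lam = (freeDualSubspace τ : Set ((k → ℝ) × (k → ℝ))) +
      maskedDualBall (fun _ : k => 1) lam := by
  ext β
  constructor
  · intro hβ
    let β₁ := ({i | τ i = 1}.indicator β.1, {i | τ i = 1}.indicator β.2)
    refine ⟨β - β₁, ?_, β₁, fun i _ => ?_, sub_add_cancel _ _⟩
    · simp +contextual [β₁, freeDualSubspace]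
    · by_cases hi : τ i = 1
      · simpa [β₁, hi] using hβ i hi
      · simpa [β₁, hi] using hlam
  · rintro ⟨w, hw, b, hb, rfl⟩ i hi
    simp only [SetLike.mem_coe, freeDualSubspace, Submodule.mem_prod, Submodule.mem_pi,
      Submodule.mem_bot] at hw
    simpa [hw.1 i hi, hw.2 i hi] using hb i rfl

lemma single_mem_maskedDualBall [DecidableEq k] (hlam : 0 ≤ lam) {i : k} (hi : τ i ≠ 1) (a b : ℝ) :
    (Pi.single i a, Pi.single i b) ∈ maskedDualBall τ lam := by
  intro j hj
  have hji : j ≠ i := by rintro rfl; exact hi hj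
  simpa [hji] using hlam

section

variable [Fintype k]

lemma dualMap_apply (β : (k → ℝ) × (k → ℝ)) : dualMap Dv Dh β = Dvᵀ *ᵥ β.1 + Dhᵀ *ᵥ β.2 := rfl

lemma isClosed_image_dualMap_maskedDualBall (hlam : 0 ≤ lam) :
    IsClosed (dualMap Dv Dh '' maskedDualBall τ lam) := by
  rw [maskedDualBall_eq_add hlam, Set.image_add, ← Submodule.map_coe]
  exact (Submodule.closed_of_finiteDimensional _).add_right_of_isCompact
    (isCompact_maskedDualBall_one.image (dualMap Dv Dh).continuous_of_finiteDimensional)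

variable [Fintype ι]

lemma dotProduct_dualMap (x : ι → ℝ) (β : (k → ℝ) × (k → ℝ)) :
    x ⬝ᵥ dualMap Dv Dh β = (Dv *ᵥ x) ⬝ᵥ β.1 + (Dh *ᵥ x) ⬝ᵥ β.2 := by
  simp only [dualMap_apply, dotProduct_add, dotProduct_mulVec, vecMul_transpose]

lemma isoTV_add_le (x x' : ι → ℝ) : isoTV Dv Dh (x + x') ≤ isoTV Dv Dh x + isoTV Dv Dh x' := by
  rw [isoTV, isoTV, isoTV, ← Finset.sum_add_distrib]
  gcongr with i
  simpa only [mulVec_add, Pi.add_apply] using sqrt_add_sq_add_le _ _ _ _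

lemma isoTV_smul (t : ℝ) (x : ι → ℝ) : isoTV Dv Dh (t • x) = |t| * isoTV Dv Dh x := by
  simp only [isoTV, mulVec_smul, Pi.smul_apply, smul_eq_mul, sqrt_mul_sq_add_mul_sq,
    Finset.mul_sum]

lemma dotProduct_dualMap_le_isoTV (hτ : ∀ i, τ i = 0 ∨ τ i = 1) {x : ι → ℝ}
    (hx : x ∈ maskSubspace τ Dv Dh) {β : (k → ℝ) × (k → ℝ)} (hβ : β ∈ maskedDualBall τ lam) :
    x ⬝ᵥ dualMap Dv Dh β ≤ lam * isoTV Dv Dh x := by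
  rw [dotProduct_dualMap, isoTV, Finset.mul_sum]
  simp only [dotProduct, ← Finset.sum_add_distrib]
  gcongr with i
  rcases hτ i with hi | hi
  · simp [(hx i hi).1, (hx i hi).2]
  · calc _ ≤ √((Dv *ᵥ x) i ^ 2 + (Dh *ᵥ x) i ^ 2) * √(β.1 i ^ 2 + β.2 i ^ 2) :=
          mul_add_mul_le_sqrt_mul_sqrt _ _ _ _
      _ ≤ √((Dv *ᵥ x) i ^ 2 + (Dh *ᵥ x) i ^ 2) * lam := by gcongr; exact hβ i hi
      _ = _ := mul_comm _ _

lemma mem_image_dualMap_of_forall_dotProduct_le (hlam : 0 ≤ lam) {p : ι → ℝ}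
    (hp : ∀ h ∈ maskSubspace τ Dv Dh, p ⬝ᵥ h ≤ lam * isoTV Dv Dh h) :
    p ∈ dualMap Dv Dh '' maskedDualBall τ lam := by
  classical
  by_contra hp'
  obtain ⟨f, u, hfK, hfp⟩ := geometric_hahn_banach_closed_point
    (convex_maskedDualBall.linear_image (dualMap Dv Dh))
    (isClosed_image_dualMap_maskedDualBall hlam) hp'
  set h : ι → ℝ := fun j => f fun l => if j = l then 1 else 0
  have hf : ∀ w, f w = h ⬝ᵥ w := fun w => by
    rw [← ContinuousLinearMap.coe_coe, LinearMap.pi_apply_eq_sum_univ]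
    simp [h, dotProduct, mul_comm]
  have hlt : ∀ β ∈ maskedDualBall τ lam, (Dv *ᵥ h) ⬝ᵥ β.1 + (Dh *ᵥ h) ⬝ᵥ β.2 < u :=
    fun β hβ => by simpa [hf, dotProduct_dualMap] using hfK _ ⟨β, hβ, rfl⟩
  -- `β` is unconstrained where `τ ≠ 1`, so `f` must vanish on those directions.
  have hh : h ∈ maskSubspace τ Dv Dh := fun i hi => by
    have hi' : τ i ≠ 1 := by rw [hi]; exact zero_ne_one
    refine ⟨eq_zero_of_forall_mul_lt (u := u) fun c => ?_,
      eq_zero_of_forall_mul_lt (u := u) fun c => ?_⟩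
    · simpa using hlt _ (single_mem_maskedDualBall hlam hi' c 0)
    · simpa using hlt _ (single_mem_maskedDualBall hlam hi' 0 c)
  choose cv ch hc hpair using fun i =>
    exists_sqrt_le_mul_add_mul_eq hlam ((Dv *ᵥ h) i) ((Dh *ᵥ h) i)
  have hTV : lam * isoTV Dv Dh h < u := by
    simpa only [isoTV, dotProduct, ← Finset.sum_add_distrib, hpair, ← Finset.mul_sum] using
      hlt (cv, ch) fun i _ => hc i
  rw [hf, dotProduct_comm] at hfp
  linarith [hp h hh]

section

variable [Fintype m] {y : m → ℝ} {A : Matrix m ι ℝ} {x : ι → ℝ}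

lemma dotProduct_residual_le_of_isMinOn {h : ι → ℝ} {c : ℝ}
    (hmin : IsMinOn (primalObjective y A Dv Dh lam) (maskSubspace τ Dv Dh) x)
    (hx : x ∈ maskSubspace τ Dv Dh) (hh : h ∈ maskSubspace τ Dv Dh) (hlam : 0 ≤ lam)
    (htv : ∀ᶠ t in 𝓝[>] (0 : ℝ), isoTV Dv Dh (x + t • h) ≤ isoTV Dv Dh x + t * c) :
    (y - A *ᵥ x) ⬝ᵥ (A *ᵥ h) ≤ lam * c := by
  set Q := ∑ i, (A *ᵥ h) i ^ 2
  have hexp : ∀ t : ℝ, ∑ i, (y i - (A *ᵥ (x + t • h)) i) ^ 2 =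
      ∑ i, (y i - (A *ᵥ x) i) ^ 2 - 2 * t * ((y - A *ᵥ x) ⬝ᵥ (A *ᵥ h)) + t ^ 2 * Q := by
    intro t
    simp only [Q, dotProduct, Finset.mul_sum, ← Finset.sum_sub_distrib, ← Finset.sum_add_distrib]
    refine Finset.sum_congr rfl fun i _ => ?_
    simp only [mulVec_add, mulVec_smul, Pi.add_apply, Pi.sub_apply, Pi.smul_apply, smul_eq_mul]
    ring
  have hev : ∀ᶠ t in 𝓝[>] (0 : ℝ), (y - A *ᵥ x) ⬝ᵥ (A *ᵥ h) ≤ lam * c + t * (Q / 2) := by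
    filter_upwards [htv, self_mem_nhdsWithin] with t ht (ht0 : 0 < t)
    have hle := isMinOn_iff.mp hmin _ (add_mem hx (Submodule.smul_mem _ t hh))
    simp only [primalObjective, hexp] at hle
    refine le_of_mul_le_mul_left ?_ ht0
    linarith [mul_le_mul_of_nonneg_left ht hlam]
  have hlim : Tendsto (fun t => lam * c + t * (Q / 2)) (𝓝[>] 0) (𝓝 (lam * c)) :=
    tendsto_nhdsWithin_of_tendsto_nhds (Continuous.tendsto' (by fun_prop) 0 _ (by simp))
  exact ge_of_tendsto hlim hev

lemma dotProduct_residual_le_isoTV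
    (hmin : IsMinOn (primalObjective y A Dv Dh lam) (maskSubspace τ Dv Dh) x)
    (hx : x ∈ maskSubspace τ Dv Dh) (hlam : 0 ≤ lam) {h : ι → ℝ} (hh : h ∈ maskSubspace τ Dv Dh) :
    (y - A *ᵥ x) ⬝ᵥ (A *ᵥ h) ≤ lam * isoTV Dv Dh h := by
  refine dotProduct_residual_le_of_isMinOn hmin hx hh hlam ?_
  filter_upwards [self_mem_nhdsWithin] with t (ht : 0 < t)
  calc isoTV Dv Dh (x + t • h) ≤ isoTV Dv Dh x + isoTV Dv Dh (t • h) := isoTV_add_le _ _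
    _ = isoTV Dv Dh x + t * isoTV Dv Dh h := by rw [isoTV_smul, abs_of_pos ht]

lemma isoTV_le_dotProduct_residual
    (hmin : IsMinOn (primalObjective y A Dv Dh lam) (maskSubspace τ Dv Dh) x)
    (hx : x ∈ maskSubspace τ Dv Dh) (hlam : 0 ≤ lam) :
    lam * isoTV Dv Dh x ≤ (y - A *ᵥ x) ⬝ᵥ (A *ᵥ x) := by
  have htv : ∀ᶠ t in 𝓝[>] (0 : ℝ),
      isoTV Dv Dh (x + t • -x) ≤ isoTV Dv Dh x + t * -isoTV Dv Dh x := by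
    filter_upwards [Ioo_mem_nhdsGT one_pos] with t ht
    have hxt : x + t • -x = (1 - t) • x := by module
    rw [hxt, isoTV_smul, abs_of_pos (sub_pos.mpr ht.2)]
    linarith
  have key := dotProduct_residual_le_of_isMinOn hmin hx (neg_mem hx) hlam htv
  rw [mulVec_neg, dotProduct_neg, mul_neg] at key
  linarith

end

end

lemma eq_of_dualObjective_le [Fintype m] {y α β : m → ℝ}
    (hle : dualObjective y β ≤ dualObjective y α)
    (hdir : (α - β) ⬝ᵥ (y - β) ≤ 0) : α = β := by
  have hid : dualObjective y α + (1 / 2) * ((α - β) ⬝ᵥ (α - β)) =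
      dualObjective y β + (α - β) ⬝ᵥ (y - β) := by
    simp only [dualObjective, dotProduct, Finset.mul_sum, ← Finset.sum_add_distrib]
    refine Finset.sum_congr rfl fun i _ => ?_
    simp only [Pi.sub_apply]
    ring
  have hsq : (α - β) ⬝ᵥ (α - β) = 0 :=
    le_antisymm (by linarith) (Finset.sum_nonneg fun i _ => mul_self_nonneg _)
  exact sub_eq_zero.mp (dotProduct_self_eq_zero.mp hsq)

end

theorem mptv_dual_opt_is_residual_general (n : ℕ) (y : Fin n → ℝ)
    (A Dv Dh : Matrix (Fin n) (Fin n) ℝ) (lam : ℝ) (hlam : 0 < lam)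
    (τ : Fin n → ℝ) (hτ : ∀ i, τ i = 0 ∨ τ i = 1)
    (xstar : Fin n → ℝ)
    (hxfeas : ∀ i, τ i = 0 → Dv.mulVec xstar i = 0 ∧ Dh.mulVec xstar i = 0)
    (hxmin : ∀ x : Fin n → ℝ,
      (∀ i, τ i = 0 → Dv.mulVec x i = 0 ∧ Dh.mulVec x i = 0) →
      (1 / 2) * ∑ i, (y i - A.mulVec xstar i) ^ 2
          + lam * ∑ i, Real.sqrt ((Dv.mulVec xstar i) ^ 2 + (Dh.mulVec xstar i) ^ 2)
        ≤ (1 / 2) * ∑ i, (y i - A.mulVec x i) ^ 2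
          + lam * ∑ i, Real.sqrt ((Dv.mulVec x i) ^ 2 + (Dh.mulVec x i) ^ 2))
    (αstar βvstar βhstar : Fin n → ℝ)
    (hdfeas : Aᵀ.mulVec αstar = Dvᵀ.mulVec βvstar + Dhᵀ.mulVec βhstar
      ∧ ∀ i, τ i = 1 → Real.sqrt ((βvstar i) ^ 2 + (βhstar i) ^ 2) ≤ lam)
    (hdmax : ∀ α βv βh : Fin n → ℝ,
      (Aᵀ.mulVec α = Dvᵀ.mulVec βv + Dhᵀ.mulVec βh
        ∧ ∀ i, τ i = 1 → Real.sqrt ((βv i) ^ 2 + (βh i) ^ 2) ≤ lam) →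
      -(1 / 2) * ∑ i, (α i) ^ 2 + ∑ i, α i * y i
        ≤ -(1 / 2) * ∑ i, (αstar i) ^ 2 + ∑ i, αstar i * y i) :
    αstar = y - A.mulVec xstar := by
  have hx : xstar ∈ maskSubspace τ Dv Dh := hxfeas
  have hmin : IsMinOn (primalObjective y A Dv Dh lam) (maskSubspace τ Dv Dh) xstar :=
    isMinOn_iff.mpr hxmin
  obtain ⟨β, hβ, hβr⟩ := mem_image_dualMap_of_forall_dotProduct_le hlam.le
    (p := Aᵀ *ᵥ (y - A *ᵥ xstar)) fun h hh => by
      rw [mulVec_transpose, ← dotProduct_mulVec]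
      exact dotProduct_residual_le_isoTV hmin hx hlam.le hh
  have hopt := hdmax _ β.1 β.2 ⟨hβr.symm, hβ⟩
  have hweak : αstar ⬝ᵥ (A *ᵥ xstar) ≤ lam * isoTV Dv Dh xstar := by
    rw [dotProduct_mulVec, ← mulVec_transpose, hdfeas.1, dotProduct_comm]
    exact dotProduct_dualMap_le_isoTV (β := (βvstar, βhstar)) hτ hx hdfeas.2
  refine eq_of_dualObjective_le hopt ?_
  rw [sub_sub_cancel, sub_dotProduct]
  linarith [isoTV_le_dotProduct_residual hmin hx hlam.le]

/-- Proposition 1 (attainment part): if x* attains the primal infimum p(τ) and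
(α*, βv*, βh*) attains the dual supremum d(τ), then α* = y − A x*. -/
theorem mptv_dual_opt_is_residual (n : ℕ) (hn : 1 ≤ n) (y : Fin n → ℝ)
    (A Dv Dh : Matrix (Fin n) (Fin n) ℝ) (lam : ℝ) (hlam : 0 < lam)
    (τ : Fin n → ℝ) (hτ : ∀ i, τ i = 0 ∨ τ i = 1)
    (xstar : Fin n → ℝ)
    (hxfeas : ∀ i, τ i = 0 → Dv.mulVec xstar i = 0 ∧ Dh.mulVec xstar i = 0)
    (hxmin : ∀ x : Fin n → ℝ,
      (∀ i, τ i = 0 → Dv.mulVec x i = 0 ∧ Dh.mulVec x i = 0) →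
      (1 / 2) * ∑ i, (y i - A.mulVec xstar i) ^ 2
          + lam * ∑ i, Real.sqrt ((Dv.mulVec xstar i) ^ 2 + (Dh.mulVec xstar i) ^ 2)
        ≤ (1 / 2) * ∑ i, (y i - A.mulVec x i) ^ 2
          + lam * ∑ i, Real.sqrt ((Dv.mulVec x i) ^ 2 + (Dh.mulVec x i) ^ 2))
    (αstar βvstar βhstar : Fin n → ℝ)
    (hdfeas : Aᵀ.mulVec αstar = Dvᵀ.mulVec βvstar + Dhᵀ.mulVec βhstar
      ∧ ∀ i, τ i = 1 → Real.sqrt ((βvstar i) ^ 2 + (βhstar i) ^ 2) ≤ lam)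
    (hdmax : ∀ α βv βh : Fin n → ℝ,
      (Aᵀ.mulVec α = Dvᵀ.mulVec βv + Dhᵀ.mulVec βh
        ∧ ∀ i, τ i = 1 → Real.sqrt ((βv i) ^ 2 + (βh i) ^ 2) ≤ lam) →
      -(1 / 2) * ∑ i, (α i) ^ 2 + ∑ i, α i * y i
        ≤ -(1 / 2) * ∑ i, (αstar i) ^ 2 + ∑ i, αstar i * y i) :
    αstar = y - A.mulVec xstar :=
  mptv_dual_opt_is_residual_general n y A Dv Dh lam hlam τ hτ xstar hxfeas hxmin αstar βvstar βhstar
    hdfeas hdmax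
end

section
/- Recovery of the dual solution for the subproblem (Proposition 2, attainment part): let S ⊆ {1,…,n} be an index set. If x* attains the primal infimum p(S) and (α*, β_v*, β_h*) attains the dual supremum d(S), then α* = y − A x*. -/
/-!
The residual `r = y - A x*` is itself dual feasible and dual optimal. Comparing `x*` with
`x* + t (x - x*)` and letting `t → 0` gives `⟪Aᵀ r, w⟫ ≤ λ TV(w)` on the feasible subspace, and
by separation from the closed convex set `{Dvᵀ βv + Dhᵀ βh : ‖(βv, βh)ᵢ‖ ≤ λ on S}` this puts
`Aᵀ r` in that set; comparing with `x = 0` gives `λ TV(x*) ≤ ⟪r, A x*⟫`. By Cauchy–Schwarz every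
dual feasible `α` has `⟪α, A x*⟫ ≤ λ TV(x*)`, and the dual objective equals
`½‖r‖² + ⟪α, A x*⟫ - ½‖α - r‖²`, so maximality of `α*` against `r` forces `α* = r`.
-/

open Matrix Metric Filter Topology Pointwise

local notation "ℝ²" => EuclideanSpace ℝ (Fin 2)

theorem ConvexOn.sum {𝕜 E β ι : Type*} [Semiring 𝕜] [PartialOrder 𝕜]
    [AddCommMonoid E] [AddCommMonoid β] [PartialOrder β] [IsOrderedAddMonoid β] [SMul 𝕜 E]
    [Module 𝕜 β] {s : Set E} (hs : Convex 𝕜 s) (t : Finset ι) {f : ι → E → β}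
    (hf : ∀ i ∈ t, ConvexOn 𝕜 s (f i)) : ConvexOn 𝕜 s (fun x => ∑ i ∈ t, f i x) := by
  simpa only [← Finset.sum_apply] using
    Finset.sum_induction f (ConvexOn 𝕜 s) (fun _ _ => ConvexOn.add) (convexOn_const 0 hs) hf

theorem EuclideanSpace.norm_fin_two (u : ℝ²) : ‖u‖ = √(u 0 ^ 2 + u 1 ^ 2) := by
  simp [EuclideanSpace.norm_eq, Fin.sum_univ_two]

theorem EuclideanSpace.inner_fin_two (u v : ℝ²) : inner ℝ u v = u 0 * v 0 + u 1 * v 1 := by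
  simp [PiLp.inner_apply, Fin.sum_univ_two, mul_comm]

theorem mem_of_forall_exists_dotProduct_le {m : Type*} [Fintype m] {C : Set (m → ℝ)}
    (hconv : Convex ℝ C) (hclosed : IsClosed C) {v : m → ℝ}
    (h : ∀ w, ∃ c ∈ C, v ⬝ᵥ w ≤ c ⬝ᵥ w) : v ∈ C := by
  classical
  rw [← iInter_halfSpaces_eq hconv hclosed]
  refine Set.mem_iInter.2 fun f => ?_
  set w : m → ℝ := fun i => f fun j => if i = j then 1 else 0
  have hf : ∀ z, f z = z ⬝ᵥ w := fun z => by
    simpa [dotProduct] using LinearMap.pi_apply_eq_sum_univ (f : (m → ℝ) →ₗ[ℝ] ℝ) z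
  obtain ⟨c, hc, hle⟩ := h w
  exact ⟨c, hc, by rwa [hf v, hf c]⟩

theorem le_of_forall_pos_le_add_mul {a b c : ℝ} (h : ∀ t, 0 < t → t ≤ 1 → a ≤ b + t * c) :
    a ≤ b := by
  have hlim : Tendsto (fun t => b + t * c) (𝓝[>] 0) (𝓝 b) :=
    tendsto_nhdsWithin_of_tendsto_nhds <|
      (by fun_prop : Continuous fun t : ℝ => b + t * c).tendsto' 0 b (by simp)
  exact ge_of_tendsto hlim <| by
    filter_upwards [Ioc_mem_nhdsGT one_pos] with t ht using h t ht.1 ht.2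

section LeastSquares

variable {m k : Type*} [Fintype m] [Fintype k]

theorem residual_dotProduct_le_sub_of_isMinOn (A : Matrix k m ℝ) (y : k → ℝ) {K : Set (m → ℝ)}
    {g : (m → ℝ) → ℝ} (hg : ConvexOn ℝ K g) {x₀ : m → ℝ} (hx₀ : x₀ ∈ K)
    (hmin : IsMinOn (fun x => 1 / 2 * ∑ i, (y i - (A *ᵥ x) i) ^ 2 + g x) K x₀)
    {x : m → ℝ} (hx : x ∈ K) :
    (y - A *ᵥ x₀) ⬝ᵥ (A *ᵥ (x - x₀)) ≤ g x - g x₀ := by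
  set r := y - A *ᵥ x₀
  set u := A *ᵥ (x - x₀)
  refine le_of_forall_pos_le_add_mul (c := u ⬝ᵥ u / 2) fun t ht ht1 => ?_
  have hxt_mem : (1 - t) • x₀ + t • x ∈ K := hg.1 hx₀ hx (by linarith) ht.le (by ring)
  have hxt : y - A *ᵥ ((1 - t) • x₀ + t • x) = r - t • u := by
    simp only [r, u, mulVec_add, mulVec_smul, mulVec_sub, sub_smul, one_smul, smul_sub]
    abel
  have hquad : ∑ i, (y i - (A *ᵥ ((1 - t) • x₀ + t • x)) i) ^ 2 =
      ∑ i, (y i - (A *ᵥ x₀) i) ^ 2 - 2 * t * (r ⬝ᵥ u) + t ^ 2 * (u ⬝ᵥ u) := by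
    simp only [← Pi.sub_apply y, hxt, dotProduct, Finset.mul_sum, ← Finset.sum_sub_distrib,
      ← Finset.sum_add_distrib]
    exact Finset.sum_congr rfl fun i _ => by
      simp only [Pi.sub_apply, Pi.smul_apply, smul_eq_mul, r]
      ring
  have hmin_t := isMinOn_iff.1 hmin _ hxt_mem
  have hconv := hg.2 hx₀ hx (by linarith : 0 ≤ 1 - t) ht.le (by ring)
  simp only [smul_eq_mul] at hconv
  rw [hquad] at hmin_t
  refine le_of_mul_le_mul_left ?_ ht
  linarith

theorem eq_sub_of_dualObjective_le {y z α : k → ℝ} (hpair : α ⬝ᵥ z ≤ (y - z) ⬝ᵥ z)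
    (hobj : -(1 / 2) * ∑ i, (y - z) i ^ 2 + ∑ i, (y - z) i * y i ≤
      -(1 / 2) * ∑ i, α i ^ 2 + ∑ i, α i * y i) :
    α = y - z := by
  have hsq : ∑ i, (α i - (y - z) i) ^ 2 ≤ 0 := by
    have key : ∑ i, (α i - (y - z) i) ^ 2 = ∑ i, (2 * ((-(1 / 2) * (y - z) i ^ 2 + (y - z) i * y i)
        - (-(1 / 2) * α i ^ 2 + α i * y i)) + 2 * (α i * z i - (y - z) i * z i)) :=
      Finset.sum_congr rfl fun i _ => by simp only [Pi.sub_apply]; ring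
    simp only [dotProduct] at hpair
    rw [key]
    simp only [Finset.sum_add_distrib, Finset.sum_sub_distrib, ← Finset.mul_sum]
    linarith
  have hzero := (Finset.sum_eq_zero_iff_of_nonneg fun i _ => sq_nonneg _).1
    (le_antisymm hsq (Finset.sum_nonneg fun i _ => sq_nonneg (α i - (y - z) i)))
  funext i
  exact sub_eq_zero.1 (pow_eq_zero_iff two_ne_zero |>.1 (hzero i (Finset.mem_univ i)))

end LeastSquares

namespace DiscreteTV

variable {m p : Type*} [Fintype m]

section Gradient

variable (Dv Dh : Matrix p m ℝ) (S : Finset p)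

def grad : (m → ℝ) →ₗ[ℝ] p → ℝ² where
  toFun x i := !₂[(Dv *ᵥ x) i, (Dh *ᵥ x) i]
  map_add' x y := by ext i j; fin_cases j <;> simp [mulVec_add]
  map_smul' c x := by ext i j; fin_cases j <;> simp [mulVec_smul]

theorem norm_grad_apply (x : m → ℝ) (i : p) :
    ‖grad Dv Dh x i‖ = √((Dv *ᵥ x) i ^ 2 + (Dh *ᵥ x) i ^ 2) :=
  EuclideanSpace.norm_fin_two _

theorem grad_apply_eq_zero_iff (x : m → ℝ) (i : p) :
    grad Dv Dh x i = 0 ↔ (Dv *ᵥ x) i = 0 ∧ (Dh *ᵥ x) i = 0 := by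
  rw [← norm_eq_zero, norm_grad_apply, Real.sqrt_eq_zero (by positivity),
    add_eq_zero_iff_of_nonneg (sq_nonneg _) (sq_nonneg _), sq_eq_zero_iff, sq_eq_zero_iff]

noncomputable def tv (x : m → ℝ) : ℝ := ∑ i ∈ S, ‖grad Dv Dh x i‖

def gradSupportedOn : Submodule ℝ (m → ℝ) := (Submodule.pi (↑S)ᶜ fun _ => ⊥).comap (grad Dv Dh)

variable {Dv Dh S}

theorem mem_gradSupportedOn {x : m → ℝ} :
    x ∈ gradSupportedOn Dv Dh S ↔ ∀ i ∉ S, grad Dv Dh x i = 0 := by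
  simp [gradSupportedOn]

theorem convexOn_tv : ConvexOn ℝ Set.univ (tv Dv Dh S) :=
  ConvexOn.sum convex_univ S fun i _ =>
    (convexOn_norm convex_univ).comp_linearMap
      ((LinearMap.proj i : (p → ℝ²) →ₗ[ℝ] ℝ²) ∘ₗ grad Dv Dh)

theorem tv_add_le (x y : m → ℝ) : tv Dv Dh S (x + y) ≤ tv Dv Dh S x + tv Dv Dh S y := by
  simp only [tv, map_add, Pi.add_apply, ← Finset.sum_add_distrib]
  exact Finset.sum_le_sum fun i _ => norm_add_le _ _

end Gradient

section Adjoint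

variable [Fintype p] (Dv Dh : Matrix p m ℝ) (S : Finset p)

def gradAdjoint : (p → ℝ²) →ₗ[ℝ] m → ℝ where
  toFun b := Dvᵀ *ᵥ (fun i => b i 0) + Dhᵀ *ᵥ (fun i => b i 1)
  map_add' b c := by ext j; simp [mulVec, dotProduct, mul_add, Finset.sum_add_distrib]; ring
  map_smul' c b := by ext j; simp [mulVec, dotProduct, Finset.mul_sum, mul_add, mul_left_comm]

theorem gradAdjoint_dotProduct (b : p → ℝ²) (w : m → ℝ) :
    gradAdjoint Dv Dh b ⬝ᵥ w = ∑ i, inner ℝ (b i) (grad Dv Dh w i) := by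
  change (Dvᵀ *ᵥ _ + Dhᵀ *ᵥ _) ⬝ᵥ w = _
  rw [add_dotProduct, mulVec_transpose, mulVec_transpose, ← dotProduct_mulVec,
    ← dotProduct_mulVec]
  simp [dotProduct, EuclideanSpace.inner_fin_two, grad, Finset.sum_add_distrib]

variable {Dv Dh S}

theorem gradAdjoint_dotProduct_le_tv {lam : ℝ} {b : p → ℝ²} (hb : ∀ i ∈ S, ‖b i‖ ≤ lam)
    {x : m → ℝ} (hx : x ∈ gradSupportedOn Dv Dh S) :
    gradAdjoint Dv Dh b ⬝ᵥ x ≤ lam * tv Dv Dh S x := by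
  rw [gradAdjoint_dotProduct, tv, Finset.mul_sum,
    ← Finset.sum_subset S.subset_univ fun i _ hi => by simp [mem_gradSupportedOn.1 hx i hi]]
  exact Finset.sum_le_sum fun i hi => (real_inner_le_norm _ _).trans <|
    mul_le_mul_of_nonneg_right (hb i hi) (norm_nonneg _)

theorem exists_gradAdjoint_dotProduct_eq_tv {lam : ℝ} (hlam : 0 ≤ lam) (w : m → ℝ) :
    ∃ b : p → ℝ², ((∀ i ∈ S, ‖b i‖ ≤ lam) ∧ ∀ i ∉ S, b i = 0) ∧
      gradAdjoint Dv Dh b ⬝ᵥ w = lam * tv Dv Dh S w := by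
  classical
  -- where `grad Dv Dh w i = 0`, the junk value `lam / 0 = 0` makes `b i = 0`, still admissible
  refine ⟨fun i => if i ∈ S then (lam / ‖grad Dv Dh w i‖) • grad Dv Dh w i else 0,
    ⟨fun i hi => ?_, fun i hi => if_neg hi⟩, ?_⟩
  · simp only [if_pos hi, norm_smul, Real.norm_of_nonneg (div_nonneg hlam (norm_nonneg _))]
    rcases eq_or_ne ‖grad Dv Dh w i‖ 0 with h | h
    · simp [h, hlam]
    · rw [div_mul_cancel₀ _ h]
  · rw [gradAdjoint_dotProduct, tv, Finset.mul_sum,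
      ← Finset.sum_subset S.subset_univ fun i _ hi => by simp [hi]]
    refine Finset.sum_congr rfl fun i hi => ?_
    rw [if_pos hi, real_inner_smul_left, real_inner_self_eq_norm_sq]
    rcases eq_or_ne ‖grad Dv Dh w i‖ 0 with h | h
    · simp [h]
    · field_simp

theorem exists_gradAdjoint_dotProduct_eq {w : m → ℝ} {i : p} (hi : i ∉ S)
    (hw : grad Dv Dh w i ≠ 0) (c : ℝ) :
    ∃ b ∈ Submodule.pi (S : Set p) (fun _ => (⊥ : Submodule ℝ ℝ²)),
      gradAdjoint Dv Dh b ⬝ᵥ w = c := by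
  classical
  refine ⟨Pi.single i ((c / ‖grad Dv Dh w i‖ ^ 2) • grad Dv Dh w i), fun j hj => ?_, ?_⟩
  · simp [show j ≠ i from fun h => hi (h ▸ hj)]
  · rw [gradAdjoint_dotProduct, Finset.sum_eq_single i (fun j _ hj => by simp [hj]) (by simp)]
    simp [real_inner_smul_left, hw]

theorem exists_gradAdjoint_eq_of_dotProduct_le_tv {lam : ℝ} (hlam : 0 ≤ lam) {v : m → ℝ}
    (hv : ∀ w ∈ gradSupportedOn Dv Dh S, v ⬝ᵥ w ≤ lam * tv Dv Dh S w) :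
    ∃ b : p → ℝ², gradAdjoint Dv Dh b = v ∧ ∀ i ∈ S, ‖b i‖ ≤ lam := by
  classical
  set T := gradAdjoint Dv Dh
  set B : Set (p → ℝ²) := Set.univ.pi fun i => if i ∈ S then closedBall 0 lam else {0}
  set M : Submodule ℝ (p → ℝ²) := Submodule.pi (S : Set p) fun _ => ⊥
  have hB_compact : IsCompact B := isCompact_univ_pi fun i => by
    split_ifs
    exacts [isCompact_closedBall _ _, isCompact_singleton]
  have hB_convex : Convex ℝ B := convex_pi fun i _ => by
    split_ifs
    exacts [convex_closedBall _ _, convex_singleton _]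
  -- `T '' B + T M` is closed (compact plus a subspace) and lies in `T '' {b | ∀ i ∈ S, ‖b i‖ ≤ lam}`
  have hv_mem : v ∈ T '' B + (M.map T : Set (m → ℝ)) := by
    refine mem_of_forall_exists_dotProduct_le
      ((hB_convex.linear_image T).add (Submodule.convex _))
      ((Submodule.closed_of_finiteDimensional _).add_left_of_isCompact
        (hB_compact.image T.continuous_of_finiteDimensional)) fun w => ?_
    by_cases hw : w ∈ gradSupportedOn Dv Dh S
    · obtain ⟨b, ⟨hbS, hbSc⟩, hb⟩ :=
        exists_gradAdjoint_dotProduct_eq_tv (Dv := Dv) (Dh := Dh) (S := S) hlam w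
      refine ⟨T b + 0, Set.add_mem_add ⟨b, fun i _ => ?_, rfl⟩ (zero_mem _), ?_⟩
      · dsimp only
        split_ifs with hi
        exacts [mem_closedBall_zero_iff.2 (hbS i hi), hbSc i hi]
      · rw [add_zero, hb]
        exact hv w hw
    · obtain ⟨i, hi, hwi⟩ : ∃ i ∉ S, grad Dv Dh w i ≠ 0 := by
        simpa [mem_gradSupportedOn] using hw
      obtain ⟨b, hbM, hb⟩ := exists_gradAdjoint_dotProduct_eq hi hwi (v ⬝ᵥ w)
      refine ⟨T 0 + T b, Set.add_mem_add ⟨0, fun j _ => ?_, rfl⟩ ⟨b, hbM, rfl⟩, ?_⟩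
      · dsimp only
        split_ifs
        exacts [mem_closedBall_self hlam, rfl]
      · rw [map_zero, zero_add, hb]
  obtain ⟨_, ⟨b, hb, rfl⟩, _, ⟨b', hb', rfl⟩, hsum⟩ := hv_mem
  refine ⟨b + b', by rw [map_add]; exact hsum, fun i hi => ?_⟩
  rw [Pi.add_apply, (Submodule.mem_bot ℝ).1 (hb' i hi), add_zero]
  simpa [hi] using hb i (Set.mem_univ i)

end Adjoint

section Optimality

variable {k : Type*} [Fintype k] {Dv Dh : Matrix p m ℝ} {S : Finset p} {A : Matrix k m ℝ}
  {y : k → ℝ} {lam : ℝ} {x₀ : m → ℝ}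

theorem mul_tv_le_residual_dotProduct_of_isMinOn (hlam : 0 ≤ lam)
    (hx₀ : x₀ ∈ gradSupportedOn Dv Dh S)
    (hmin : IsMinOn (fun x => 1 / 2 * ∑ i, (y i - (A *ᵥ x) i) ^ 2 + lam * tv Dv Dh S x)
      (gradSupportedOn Dv Dh S) x₀) :
    lam * tv Dv Dh S x₀ ≤ (y - A *ᵥ x₀) ⬝ᵥ (A *ᵥ x₀) := by
  have := residual_dotProduct_le_sub_of_isMinOn A y
    ((convexOn_tv.subset (Set.subset_univ _) (Submodule.convex _)).smul hlam) hx₀ hmin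
    (zero_mem _)
  have htv_zero : tv Dv Dh S 0 = 0 := by simp [tv]
  rw [zero_sub, mulVec_neg, dotProduct_neg, smul_eq_mul, smul_eq_mul, htv_zero] at this
  linarith

theorem transpose_residual_dotProduct_le_mul_tv_of_isMinOn (hlam : 0 ≤ lam)
    (hx₀ : x₀ ∈ gradSupportedOn Dv Dh S)
    (hmin : IsMinOn (fun x => 1 / 2 * ∑ i, (y i - (A *ᵥ x) i) ^ 2 + lam * tv Dv Dh S x)
      (gradSupportedOn Dv Dh S) x₀)
    {w : m → ℝ} (hw : w ∈ gradSupportedOn Dv Dh S) :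
    (Aᵀ *ᵥ (y - A *ᵥ x₀)) ⬝ᵥ w ≤ lam * tv Dv Dh S w := by
  have := residual_dotProduct_le_sub_of_isMinOn A y
    ((convexOn_tv.subset (Set.subset_univ _) (Submodule.convex _)).smul hlam) hx₀ hmin
    (add_mem hx₀ hw)
  rw [add_sub_cancel_left, smul_eq_mul, smul_eq_mul] at this
  rw [mulVec_transpose, ← dotProduct_mulVec]
  linarith [mul_le_mul_of_nonneg_left (tv_add_le (Dv := Dv) (Dh := Dh) (S := S) x₀ w) hlam]

end Optimality

end DiscreteTV

open DiscreteTV in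
theorem mptv_subproblem_dual_opt_is_residual_general (n : ℕ) (y : Fin n → ℝ)
    (A Dv Dh : Matrix (Fin n) (Fin n) ℝ) (lam : ℝ) (hlam : 0 < lam)
    (S : Finset (Fin n))
    (xstar : Fin n → ℝ)
    (hxfeas : ∀ i, i ∉ S → Dv.mulVec xstar i = 0 ∧ Dh.mulVec xstar i = 0)
    (hxmin : ∀ x : Fin n → ℝ,
      (∀ i, i ∉ S → Dv.mulVec x i = 0 ∧ Dh.mulVec x i = 0) →
      (1 / 2) * ∑ i, (y i - A.mulVec xstar i) ^ 2
          + lam * ∑ i ∈ S, Real.sqrt ((Dv.mulVec xstar i) ^ 2 + (Dh.mulVec xstar i) ^ 2)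
        ≤ (1 / 2) * ∑ i, (y i - A.mulVec x i) ^ 2
          + lam * ∑ i ∈ S, Real.sqrt ((Dv.mulVec x i) ^ 2 + (Dh.mulVec x i) ^ 2))
    (αstar βvstar βhstar : Fin n → ℝ)
    (hdfeas : Aᵀ.mulVec αstar = Dvᵀ.mulVec βvstar + Dhᵀ.mulVec βhstar
      ∧ ∀ i ∈ S, Real.sqrt ((βvstar i) ^ 2 + (βhstar i) ^ 2) ≤ lam)
    (hdmax : ∀ α βv βh : Fin n → ℝ,
      (Aᵀ.mulVec α = Dvᵀ.mulVec βv + Dhᵀ.mulVec βh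
        ∧ ∀ i ∈ S, Real.sqrt ((βv i) ^ 2 + (βh i) ^ 2) ≤ lam) →
      -(1 / 2) * ∑ i, (α i) ^ 2 + ∑ i, α i * y i
        ≤ -(1 / 2) * ∑ i, (αstar i) ^ 2 + ∑ i, αstar i * y i) :
    αstar = y - A.mulVec xstar := by
  have mem_iff (x : Fin n → ℝ) : x ∈ gradSupportedOn Dv Dh S ↔
      ∀ i, i ∉ S → Dv.mulVec x i = 0 ∧ Dh.mulVec x i = 0 := by
    simp only [mem_gradSupportedOn, grad_apply_eq_zero_iff]
  have hx₀ := (mem_iff xstar).2 hxfeas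
  have hmin : IsMinOn (fun x => 1 / 2 * ∑ i, (y i - (A *ᵥ x) i) ^ 2 + lam * tv Dv Dh S x)
      (gradSupportedOn Dv Dh S) xstar := isMinOn_iff.2 fun x hx => by
    simpa only [tv, norm_grad_apply] using hxmin x ((mem_iff x).1 hx)
  obtain ⟨b, hb, hbS⟩ := exists_gradAdjoint_eq_of_dotProduct_le_tv hlam.le fun w hw =>
    transpose_residual_dotProduct_le_mul_tv_of_isMinOn hlam.le hx₀ hmin hw
  have hpair : αstar ⬝ᵥ (A *ᵥ xstar) ≤ lam * tv Dv Dh S xstar := by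
    rw [dotProduct_mulVec, ← mulVec_transpose, hdfeas.1]
    exact gradAdjoint_dotProduct_le_tv (b := fun i => !₂[βvstar i, βhstar i])
      (fun i hi => (EuclideanSpace.norm_fin_two _).trans_le (hdfeas.2 i hi)) hx₀
  have hslack := mul_tv_le_residual_dotProduct_of_isMinOn hlam.le hx₀ hmin
  refine eq_sub_of_dualObjective_le (hpair.trans hslack)
    (hdmax _ _ _ ⟨hb.symm, fun i hi => ?_⟩)
  exact (EuclideanSpace.norm_fin_two (b i)).symm.trans_le (hbS i hi)

/-- Proposition 2 (attainment part): for an index set S, if x* attains the primal infimum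
p(S) and (α*, βv*, βh*) attains the dual supremum d(S), then α* = y − A x*. -/
theorem mptv_subproblem_dual_opt_is_residual (n : ℕ) (hn : 1 ≤ n) (y : Fin n → ℝ)
    (A Dv Dh : Matrix (Fin n) (Fin n) ℝ) (lam : ℝ) (hlam : 0 < lam)
    (S : Finset (Fin n))
    (xstar : Fin n → ℝ)
    (hxfeas : ∀ i, i ∉ S → Dv.mulVec xstar i = 0 ∧ Dh.mulVec xstar i = 0)
    (hxmin : ∀ x : Fin n → ℝ,
      (∀ i, i ∉ S → Dv.mulVec x i = 0 ∧ Dh.mulVec x i = 0) →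
      (1 / 2) * ∑ i, (y i - A.mulVec xstar i) ^ 2
          + lam * ∑ i ∈ S, Real.sqrt ((Dv.mulVec xstar i) ^ 2 + (Dh.mulVec xstar i) ^ 2)
        ≤ (1 / 2) * ∑ i, (y i - A.mulVec x i) ^ 2
          + lam * ∑ i ∈ S, Real.sqrt ((Dv.mulVec x i) ^ 2 + (Dh.mulVec x i) ^ 2))
    (αstar βvstar βhstar : Fin n → ℝ)
    (hdfeas : Aᵀ.mulVec αstar = Dvᵀ.mulVec βvstar + Dhᵀ.mulVec βhstar
      ∧ ∀ i ∈ S, Real.sqrt ((βvstar i) ^ 2 + (βhstar i) ^ 2) ≤ lam)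
    (hdmax : ∀ α βv βh : Fin n → ℝ,
      (Aᵀ.mulVec α = Dvᵀ.mulVec βv + Dhᵀ.mulVec βh
        ∧ ∀ i ∈ S, Real.sqrt ((βv i) ^ 2 + (βh i) ^ 2) ≤ lam) →
      -(1 / 2) * ∑ i, (α i) ^ 2 + ∑ i, α i * y i
        ≤ -(1 / 2) * ∑ i, (αstar i) ^ 2 + ∑ i, αstar i * y i) :
    αstar = y - A.mulVec xstar :=
  mptv_subproblem_dual_opt_is_residual_general n y A Dv Dh lam hlam S xstar hxfeas hxmin αstar
    βvstar βhstar hdfeas hdmax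
end

section
/- Convergence of the cutting-plane iterates (Proposition 3): let (α_t) ⊆ ℝ^n, (θ_t) ⊆ ℝ and (τ_t) ⊆ Λ be sequences with α_t → ᾱ and θ_t → θ̄ such that for every t: (i) τ_{t+1} maximizes φ(α_t, ·) over Λ, i.e., φ(α_t, τ_{t+1}) = max_{τ ∈ Λ} φ(α_t, τ), and (ii) θ_{t+1} ≥ φ(α_{t+1}, τ_{t+1}). Then θ̄ ≥ φ(ᾱ, τ) for every τ ∈ Λ; consequently θ̄ ≥ θ* := inf_{α ∈ ℝ^n} max_{τ ∈ Λ} φ(α, τ), and if additionally θ̄ ≤ θ*, then θ̄ = θ* and ᾱ attains this infimum, i.e., (ᾱ, θ̄) is a global optimum of the problem 'minimize θ subject to φ(α, τ) ≤ θ for all τ ∈ Λ'. -/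
open Matrix BigOperators

/-- Proposition 3 (convergence of the cutting-plane iterates): if α_t → ᾱ, θ_t → θ̄,
τ_{t+1} maximizes φ(α_t, ·) over Λ, and θ_{t+1} ≥ φ(α_{t+1}, τ_{t+1}), then θ̄ ≥ φ(ᾱ, τ)
for every τ ∈ Λ; consequently θ̄ ≥ θ* := inf_α max_τ φ(α, τ), and if additionally θ̄ ≤ θ*,
then θ̄ = θ* and ᾱ attains this infimum. -/
theorem cuttingPlane_convergence {n : ℕ} {Λ : Type*} [Fintype Λ] [Nonempty Λ]
    (φ : (Fin n → ℝ) → Λ → ℝ) (hφ : ∀ τ, Continuous (fun a : Fin n → ℝ => φ a τ))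
    (αs : ℕ → (Fin n → ℝ)) (θs : ℕ → ℝ) (τs : ℕ → Λ)
    (αbar : Fin n → ℝ) (θbar : ℝ)
    (hαlim : Filter.Tendsto αs Filter.atTop (nhds αbar))
    (hθlim : Filter.Tendsto θs Filter.atTop (nhds θbar))
    (hmax : ∀ t, φ (αs t) (τs (t + 1))
      = Finset.univ.sup' Finset.univ_nonempty (fun τ => φ (αs t) τ))
    (hge : ∀ t, φ (αs (t + 1)) (τs (t + 1)) ≤ θs (t + 1)) :
    (∀ τ, φ αbar τ ≤ θbar)
    ∧ sInf (Set.range (fun a : Fin n → ℝ =>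
        ((Finset.univ.sup' Finset.univ_nonempty (fun τ => φ a τ) : ℝ) : EReal)))
      ≤ (θbar : EReal)
    ∧ ((θbar : EReal) ≤ sInf (Set.range (fun a : Fin n → ℝ =>
          ((Finset.univ.sup' Finset.univ_nonempty (fun τ => φ a τ) : ℝ) : EReal))) →
        (θbar : EReal) = sInf (Set.range (fun a : Fin n → ℝ =>
          ((Finset.univ.sup' Finset.univ_nonempty (fun τ => φ a τ) : ℝ) : EReal)))
        ∧ ((Finset.univ.sup' Finset.univ_nonempty (fun τ => φ αbar τ) : ℝ) : EReal)
          = sInf (Set.range (fun a : Fin n → ℝ =>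
            ((Finset.univ.sup' Finset.univ_nonempty (fun τ => φ a τ) : ℝ) : EReal)))) := by
  -- choose τ* hit infinitely often by t ↦ τs (t+1)
  obtain ⟨τstar, hτstar⟩ := Finite.exists_infinite_fiber (fun t : ℕ => τs (t + 1))
  have hS : {t : ℕ | τs (t + 1) = τstar}.Infinite := Set.infinite_coe_iff.mp hτstar
  have hfreq : ∃ᶠ t in Filter.atTop, t ∈ {t : ℕ | τs (t + 1) = τstar} := by
    rw [← Nat.cofinite_eq_atTop]
    exact hS.frequently_cofinite
  set l : Filter ℕ := Filter.atTop ⊓ Filter.principal {t : ℕ | τs (t + 1) = τstar} with hl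
  haveI hne : l.NeBot := Filter.frequently_mem_iff_neBot.mp hfreq
  have hlle : l ≤ Filter.atTop := inf_le_left
  have hmem : ∀ᶠ t in l, τs (t + 1) = τstar := by
    have : ∀ᶠ t in Filter.principal {t : ℕ | τs (t + 1) = τstar}, τs (t + 1) = τstar :=
      Filter.eventually_principal.mpr (fun t ht => ht)
    exact this.filter_mono inf_le_right
  -- limits along l
  have hαl : Filter.Tendsto αs l (nhds αbar) := hαlim.mono_left hlle
  have hα1l : Filter.Tendsto (fun t => αs (t + 1)) l (nhds αbar) :=
    (hαlim.comp (Filter.tendsto_add_atTop_nat 1)).mono_left hlle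
  have hθ1l : Filter.Tendsto (fun t => θs (t + 1)) l (nhds θbar) :=
    (hθlim.comp (Filter.tendsto_add_atTop_nat 1)).mono_left hlle
  -- φ(ᾱ, τ*) ≤ θbar
  have hstar : φ αbar τstar ≤ θbar := by
    refine le_of_tendsto_of_tendsto (((hφ τstar).tendsto αbar).comp hα1l) hθ1l ?_
    filter_upwards [hmem] with t ht
    show φ (αs (t + 1)) τstar ≤ θs (t + 1)
    rw [← ht]; exact hge t
  have key : ∀ τ, φ αbar τ ≤ θbar := by
    intro τ
    have h1 : φ αbar τ ≤ φ αbar τstar := by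
      refine le_of_tendsto_of_tendsto (((hφ τ).tendsto αbar).comp hαl)
        (((hφ τstar).tendsto αbar).comp hαl) ?_
      filter_upwards [hmem] with t ht
      show φ (αs t) τ ≤ φ (αs t) τstar
      have := hmax t
      rw [ht] at this
      rw [this]
      exact Finset.le_sup' _ (Finset.mem_univ τ)
    exact h1.trans hstar
  refine ⟨key, ?_, ?_⟩
  · -- sInf ≤ θbar via value at ᾱ
    have h1 : sInf (Set.range (fun a : Fin n → ℝ =>
        ((Finset.univ.sup' Finset.univ_nonempty (fun τ => φ a τ) : ℝ) : EReal)))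
        ≤ ((Finset.univ.sup' Finset.univ_nonempty (fun τ => φ αbar τ) : ℝ) : EReal) :=
      sInf_le ⟨αbar, rfl⟩
    have h2 : (Finset.univ.sup' Finset.univ_nonempty (fun τ => φ αbar τ) : ℝ) ≤ θbar :=
      Finset.sup'_le _ _ (fun τ _ => key τ)
    exact h1.trans (EReal.coe_le_coe_iff.mpr h2)
  · intro hle
    have h1 : sInf (Set.range (fun a : Fin n → ℝ =>
        ((Finset.univ.sup' Finset.univ_nonempty (fun τ => φ a τ) : ℝ) : EReal)))
        ≤ ((Finset.univ.sup' Finset.univ_nonempty (fun τ => φ αbar τ) : ℝ) : EReal) :=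
      sInf_le ⟨αbar, rfl⟩
    have h2 : ((Finset.univ.sup' Finset.univ_nonempty (fun τ => φ αbar τ) : ℝ) : EReal)
        ≤ (θbar : EReal) :=
      EReal.coe_le_coe_iff.mpr (Finset.sup'_le _ _ (fun τ _ => key τ))
    exact ⟨le_antisymm hle (h1.trans h2), le_antisymm (h2.trans hle) h1⟩
end
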